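/- Take r = 9 and let H = dE_0 − m_1E_1 − ⋯ − m_9E_9 be an E-standard class in Pic_9 with m_9 ≥ 1, χ(H) ≥ 3, and H·C_9 ≤ 1. Then there is an integer m ≥ 2 with H = mC_9 + E_9, i.e. d = 3m, m_1 = ⋯ = m_8 = m and m_9 = m − 1. -/

import Mathlib

open Finset

/-- The intersection form on `Pic_r = ℤ^{r+1}`: the symmetric bilinear form with
`E_0·E_0 = 1`, `E_i·E_i = -1` for `1 ≤ i ≤ r`, and `E_i·E_j = 0` for `i ≠ j`. -/
def inter {r : ℕ} (x y : Fin (r + 1) → ℤ) : ℤ :=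
  2 * (x 0 * y 0) - ∑ i, x i * y i

/-- The standard basis class `E_i` of `Pic_r`. -/
def Eb (r : ℕ) (i : Fin (r + 1)) : Fin (r + 1) → ℤ :=
  fun j => if j = i then 1 else 0

/-- The canonical class `K = -3E_0 + E_1 + ⋯ + E_r`. -/
def Kc (r : ℕ) : Fin (r + 1) → ℤ :=
  fun j => if j = 0 then -3 else 1

/-- The roots `r_0 = E_0 - E_1 - E_2 - E_3` and `r_i = E_i - E_{i+1}` for `1 ≤ i ≤ r-1`. -/
def root (r : ℕ) (i : Fin r) : Fin (r + 1) → ℤ :=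
  if (i : ℕ) = 0 then Eb r 0 - Eb r 1 - Eb r 2 - Eb r 3
  else Eb r i.castSucc - Eb r i.succ

/-- The reflection `σ_v(x) = x + (x·v) v` in the root `v`. -/
def reflect {r : ℕ} (v x : Fin (r + 1) → ℤ) : Fin (r + 1) → ℤ :=
  x + inter x v • v

/-- Membership in the Weyl group `W_r`: the group of transformations of `Pic_r`
generated by the reflections `σ_i(x) = x + (x·r_i) r_i`, `0 ≤ i ≤ r-1` (since each
generator is an involution, the submonoid generated coincides with the subgroup
generated). -/
def InWeyl (r : ℕ) (f : (Fin (r + 1) → ℤ) → (Fin (r + 1) → ℤ)) : Prop :=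
  f ∈ Submonoid.closure
    { g : Function.End (Fin (r + 1) → ℤ) | ∃ i : Fin r, g = reflect (root r i) }

/-- `H = dE_0 - m_1E_1 - ⋯ - m_rE_r` (so `d = H 0`, `m_i = -H i`) is E-standard:
`d ≥ m_1 ≥ ⋯ ≥ m_r ≥ 0`, `d ≥ m_1 + m_2` and `d ≥ m_1 + m_2 + m_3`. -/
def EStandard (r : ℕ) (H : Fin (r + 1) → ℤ) : Prop :=
  -H 1 ≤ H 0 ∧
  (∀ i j : Fin (r + 1), 1 ≤ (i : ℕ) → i ≤ j → -H j ≤ -H i) ∧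
  0 ≤ -H (Fin.last r) ∧
  -H 1 + -H 2 ≤ H 0 ∧
  -H 1 + -H 2 + -H 3 ≤ H 0

/-- `H = dE_0 - m_1E_1 - ⋯ - m_rE_r` is E-semi-standard: `d ≥ 0`,
`d ≥ m_1 ≥ ⋯ ≥ m_r` and `d ≥ m_1 + m_2 + m_3` (the `m_i` may be negative). -/
def ESemiStandard (r : ℕ) (H : Fin (r + 1) → ℤ) : Prop :=
  0 ≤ H 0 ∧
  -H 1 ≤ H 0 ∧
  (∀ i j : Fin (r + 1), 1 ≤ (i : ℕ) → i ≤ j → -H j ≤ -H i) ∧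
  -H 1 + -H 2 + -H 3 ≤ H 0

/-- A class is standard if its image under some element of `W_r` is E-standard. -/
def Standard (r : ℕ) (H : Fin (r + 1) → ℤ) : Prop :=
  ∃ f, InWeyl r f ∧ EStandard r (f H)

/-- A class is semi-standard if its image under some element of `W_r` is
E-semi-standard. -/
def SemiStandard (r : ℕ) (H : Fin (r + 1) → ℤ) : Prop :=
  ∃ f, InWeyl r f ∧ ESemiStandard r (f H)

/-- An exceptional class: an element of the `W_r`-orbit of `E_r`. -/
def Exceptional (r : ℕ) (x : Fin (r + 1) → ℤ) : Prop :=
  ∃ f, InWeyl r f ∧ x = f (Eb r (Fin.last r))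

/-- A line class: an element of the `W_r`-orbit of `E_0`. -/
def LineClass (r : ℕ) (x : Fin (r + 1) → ℤ) : Prop :=
  ∃ f, InWeyl r f ∧ x = f (Eb r 0)

/-- A pencil class: an element of the `W_r`-orbit of `E_0 - E_1`. -/
def PencilClass (r : ℕ) (x : Fin (r + 1) → ℤ) : Prop :=
  ∃ f, InWeyl r f ∧ x = f (Eb r 0 - Eb r 1)

/-- The elliptic generating class `C_i = 3E_0 - E_1 - ⋯ - E_i`. -/
def Cc (r : ℕ) (i : Fin (r + 1)) : Fin (r + 1) → ℤ :=
  fun j => if j = 0 then 3 else if j ≤ i then -1 else 0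

/-- The Euler characteristic `χ(H) = 1 + (H·H - H·K)/2`. -/
def chi (r : ℕ) (H : Fin (r + 1) → ℤ) : ℤ :=
  1 + (inter H H - inter H (Kc r)) / 2

/-! Writing `H = d E_0 - ∑ m_i E_i`, one has
`H·C_9 = 3(d - m_1 - m_2 - m_3) + 2(m_1 - m_3) + 2(m_2 - m_3) + ∑_{i ≥ 4} (m_3 - m_i)`,
a sum of non-negative terms for an E-standard class. So `H·C_9 ≤ 1` forces
`H = m C_9` or `H = m C_9 + E_9` with `m = m_1`. Since `C_9 = -K` is isotropic,
`χ(m C_9) = 1` and `χ(m C_9 + E_9) = 1 + m`, and `χ(H) ≥ 3` leaves the second case with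
`m ≥ 2`. -/

section IntersectionForm

variable {r : ℕ}

theorem inter_comm (x y : Fin (r + 1) → ℤ) : inter x y = inter y x := by
  simp only [inter, mul_comm]

theorem inter_add_left (x y z : Fin (r + 1) → ℤ) :
    inter (x + y) z = inter x z + inter y z := by
  simp only [inter, Pi.add_apply, add_mul, Finset.sum_add_distrib]
  ring

theorem inter_add_right (x y z : Fin (r + 1) → ℤ) :
    inter x (y + z) = inter x y + inter x z := by
  rw [inter_comm, inter_add_left, inter_comm y, inter_comm z]

theorem inter_smul_left (a : ℤ) (x y : Fin (r + 1) → ℤ) :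
    inter (a • x) y = a * inter x y := by
  simp only [inter, Pi.smul_apply, smul_eq_mul, mul_assoc, ← Finset.mul_sum]
  ring

theorem inter_smul_right (a : ℤ) (x y : Fin (r + 1) → ℤ) :
    inter x (a • y) = a * inter x y := by
  rw [inter_comm, inter_smul_left, inter_comm]

theorem inter_neg_right (x y : Fin (r + 1) → ℤ) : inter x (-y) = -inter x y := by
  simpa using inter_smul_right (-1) x y

theorem Kc_eq_neg_Cc_last : Kc r = -Cc r (Fin.last r) := by
  funext j
  by_cases hj : j = 0 <;> simp [Kc, Cc, hj, Fin.le_last]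

theorem inter_Cc_last (H : Fin (r + 1) → ℤ) :
    inter H (Cc r (Fin.last r)) = 3 * H 0 + ∑ i : Fin r, H i.succ := by
  simp only [inter, Cc, ↓reduceIte, Fin.le_last, Int.reduceNeg, mul_ite, mul_neg, mul_one,
    Fin.sum_univ_succ, Fin.succ_ne_zero, sum_neg_distrib]
  ring

theorem chi_eq_inter_add_inter_Cc_last (H : Fin (r + 1) → ℤ) :
    chi r H = 1 + (inter H H + inter H (Cc r (Fin.last r))) / 2 := by
  rw [chi, Kc_eq_neg_Cc_last, inter_neg_right, sub_neg_eq_add]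

end IntersectionForm

theorem inter_Cc_nine_self : inter (Cc 9 9) (Cc 9 9) = 0 := by decide
theorem inter_Cc_nine_Eb_nine : inter (Cc 9 9) (Eb 9 9) = 1 := by decide
theorem inter_Eb_nine_self : inter (Eb 9 9) (Eb 9 9) = -1 := by decide

theorem chi_smul_Cc_nine (m : ℤ) : chi 9 (m • Cc 9 9) = 1 := by
  rw [chi_eq_inter_add_inter_Cc_last, show Fin.last 9 = 9 from rfl]
  simp only [inter_smul_left, inter_smul_right, inter_Cc_nine_self]
  omega

theorem chi_smul_Cc_nine_add_Eb_nine (m : ℤ) : chi 9 (m • Cc 9 9 + Eb 9 9) = 1 + m := by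
  rw [chi_eq_inter_add_inter_Cc_last, show Fin.last 9 = 9 from rfl]
  simp only [inter_add_left, inter_add_right, inter_smul_left, inter_smul_right,
    inter_comm (Eb 9 9), inter_Cc_nine_self, inter_Cc_nine_Eb_nine, inter_Eb_nine_self]
  omega

theorem EStandard.eq_smul_Cc_nine_of_inter_le_one {H : Fin 10 → ℤ} (hst : EStandard 9 H)
    (hC9 : inter H (Cc 9 9) ≤ 1) :
    ∃ m : ℤ, H = m • Cc 9 9 ∨ H = m • Cc 9 9 + Eb 9 9 := by
  obtain ⟨-, hanti, -, -, h123⟩ := hst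
  have h12 := hanti 1 2 (by decide) (by decide)
  have h23 := hanti 2 3 (by decide) (by decide)
  have h34 := hanti 3 4 (by decide) (by decide)
  have h45 := hanti 4 5 (by decide) (by decide)
  have h56 := hanti 5 6 (by decide) (by decide)
  have h67 := hanti 6 7 (by decide) (by decide)
  have h78 := hanti 7 8 (by decide) (by decide)
  have h89 := hanti 8 9 (by decide) (by decide)
  rw [show (9 : Fin 10) = Fin.last 9 from rfl, inter_Cc_last] at hC9
  simp only [Fin.sum_univ_succ, Fin.sum_univ_zero, Fin.reduceSucc, Fin.succ_zero_eq_one] at hC9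
  refine ⟨-H 1, ?_⟩
  by_cases h9 : H 9 = H 1
  · left
    funext i
    fin_cases i <;> simp [Cc] <;> omega
  · right
    funext i
    fin_cases i <;> simp [Cc, Eb] <;> omega

theorem low_degree_on_C9_general (H : Fin 10 → ℤ)
    (hst : EStandard 9 H) (hchi : 3 ≤ chi 9 H)
    (hC9 : inter H (Cc 9 9) ≤ 1) :
    ∃ m : ℤ, 2 ≤ m ∧ H 0 = 3 * m ∧
      (∀ i : Fin 10, 1 ≤ (i : ℕ) → (i : ℕ) ≤ 8 → H i = -m) ∧
      H 9 = -(m - 1) := by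
  obtain ⟨m, rfl | rfl⟩ := hst.eq_smul_Cc_nine_of_inter_le_one hC9
  · rw [chi_smul_Cc_nine] at hchi
    omega
  · rw [chi_smul_Cc_nine_add_Eb_nine] at hchi
    refine ⟨m, by omega, by simp [Cc, Eb, mul_comm], fun i hi1 hi8 => ?_, by simp [Cc, Eb]; ring⟩
    fin_cases i <;> simp [Cc, Eb] at hi1 hi8 ⊢

/-- Take `r = 9` and let `H = dE_0 − m_1E_1 − ⋯ − m_9E_9` be an E-standard class in
`Pic_9` with `m_9 ≥ 1`, `χ(H) ≥ 3` and `H·C_9 ≤ 1`. Then there is an integer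
`m ≥ 2` with `H = mC_9 + E_9`, i.e. `d = 3m`, `m_1 = ⋯ = m_8 = m` and
`m_9 = m − 1` (recall `d = H 0`, `m_i = -H i`). -/
theorem low_degree_on_C9 (H : Fin 10 → ℤ)
    (hst : EStandard 9 H) (hm9 : 1 ≤ -H 9) (hchi : 3 ≤ chi 9 H)
    (hC9 : inter H (Cc 9 9) ≤ 1) :
    ∃ m : ℤ, 2 ≤ m ∧ H 0 = 3 * m ∧
      (∀ i : Fin 10, 1 ≤ (i : ℕ) → (i : ℕ) ≤ 8 → H i = -m) ∧
      H 9 = -(m - 1) :=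
  low_degree_on_C9_general H hst hchi hC9
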